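/- Let T : L²(O,μ) → L²(O,μ) be a linear sub-Markovian operator (0 ≤ φ ≤ 1 a.e. implies 0 ≤ Tφ ≤ 1 a.e.) that is also a contraction in the L¹(O,μ)-norm, and let j : ℝ → [0,∞) be a convex function with j(0)=0. Then for every v ∈ L²(O,μ) with j(v) ∈ L¹(O,μ), one has ‖j(Tv)‖_{L¹} ≤ ‖j(v)‖_{L¹}. -/

import Mathlib

open MeasureTheory Filter
open scoped ENNReal

/-!
A convex `j ≥ 0` with `j 0 = 0` is the increasing limit of the envelopes
`jₘ = max_{i ≤ m} (aᵢ r + bᵢ)⁺` built from countably many affine minorants, whose intercepts satisfy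
`bᵢ ≤ j 0 = 0`. A sub-Markovian operator is positive (nonnegative simple functions are dense in the
positive cone), hence `u ≤ c` implies `T u ≤ c` for every constant `c ≥ 0`; applied to
`aᵢ v - jₘ(v) ≤ -bᵢ` this gives `jₘ(T v) ≤ T (jₘ(v))`. As `jₘ` is Lipschitz, `jₘ(v)` lies in the
same `Lp` space, so `L¹`-contractivity bounds `∫ jₘ(T v)` by `∫ jₘ(v) ≤ ∫ j(v)`, and monotone
convergence in `m` concludes.
-/

noncomputable def affineEnvelope (a b : ℕ → ℝ) (m : ℕ) (r : ℝ) : ℝ :=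
  partialSups (fun i => max (a i * r + b i) 0) m

section AffineEnvelope

variable {a b : ℕ → ℝ}

lemma affineEnvelope_nonneg (m : ℕ) (r : ℝ) : 0 ≤ affineEnvelope a b m r :=
  (le_max_right _ _).trans (le_partialSups_of_le (fun i => max (a i * r + b i) 0) (Nat.zero_le m))

lemma affineEnvelope_le_iff {m : ℕ} {r s : ℝ} :
    affineEnvelope a b m r ≤ s ↔ 0 ≤ s ∧ ∀ i ≤ m, a i * r + b i ≤ s := by
  simp only [affineEnvelope, partialSups_le_iff, max_le_iff]
  exact ⟨fun h => ⟨(h 0 (Nat.zero_le m)).2, fun i hi => (h i hi).1⟩,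
    fun h i hi => ⟨h.2 i hi, h.1⟩⟩

lemma affineEnvelope_monotone (r : ℝ) : Monotone fun m => affineEnvelope a b m r :=
  partialSups_monotone _

lemma affineEnvelope_apply_zero (hb : ∀ i, b i ≤ 0) (m : ℕ) : affineEnvelope a b m 0 = 0 :=
  le_antisymm (affineEnvelope_le_iff.2 ⟨le_rfl, fun i _ => by simpa using hb i⟩)
    (affineEnvelope_nonneg m 0)

lemma affineEnvelope_zero : affineEnvelope a b 0 = fun r => max (a 0 * r + b 0) 0 := by
  ext r
  simp [affineEnvelope]

lemma affineEnvelope_succ (m : ℕ) : affineEnvelope a b (m + 1) =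
    fun r => max (affineEnvelope a b m r) (max (a (m + 1) * r + b (m + 1)) 0) := by
  ext r
  exact partialSups_succ (fun i => max (a i * r + b i) 0) m

lemma lipschitzWith_affineEnvelope (m : ℕ) : ∃ K, LipschitzWith K (affineEnvelope a b m) := by
  have piece (i : ℕ) : LipschitzWith ‖a i‖₊ fun r => max (a i * r + b i) 0 :=
    (LipschitzWith.of_dist_le_mul fun x y => by
      simp [Real.dist_eq, ← mul_sub, abs_mul]).max_const 0
  induction m with
  | zero => exact ⟨_, by simpa [affineEnvelope_zero] using piece 0⟩
  | succ m ih =>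
    obtain ⟨K, hK⟩ := ih
    exact ⟨_, by simpa [affineEnvelope_succ] using hK.max (piece (m + 1))⟩

lemma continuous_affineEnvelope (m : ℕ) : Continuous (affineEnvelope a b m) :=
  (lipschitzWith_affineEnvelope m).choose_spec.continuous

lemma tendsto_affineEnvelope {j : ℝ → ℝ} (hle : ∀ i r, a i * r + b i ≤ j r)
    (hsup : ∀ r, ⨆ i, (a i * r + b i) = j r) (hj : ∀ r, 0 ≤ j r) (r : ℝ) :
    Tendsto (fun m => affineEnvelope a b m r) atTop (nhds (j r)) := by
  refine tendsto_atTop_isLUB (affineEnvelope_monotone r) ⟨?_, fun s hs => ?_⟩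
  · rintro _ ⟨m, rfl⟩
    exact affineEnvelope_le_iff.2 ⟨hj r, fun i _ => hle i r⟩
  · have hs' (m : ℕ) : affineEnvelope a b m r ≤ s := hs ⟨m, rfl⟩
    rw [← hsup r]
    exact ciSup_le fun i => (affineEnvelope_le_iff.1 (hs' i)).2 i le_rfl

end AffineEnvelope

section SubMarkovian

variable {α : Type*} [MeasurableSpace α] {μ : Measure α} {p : ℝ≥0∞} [Fact (1 ≤ p)]

def IsSubMarkovian (T : Lp ℝ p μ →L[ℝ] Lp ℝ p μ) : Prop :=
  ∀ φ : Lp ℝ p μ, (∀ᵐ x ∂μ, 0 ≤ φ x ∧ φ x ≤ 1) → ∀ᵐ x ∂μ, 0 ≤ T φ x ∧ T φ x ≤ 1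

variable {T : Lp ℝ p μ →L[ℝ] Lp ℝ p μ}

namespace IsSubMarkovian

lemma ae_mem_Icc (hT : IsSubMarkovian T) {φ : Lp ℝ p μ} {c : ℝ} (hc : 0 ≤ c)
    (hφ : ∀ᵐ x ∂μ, 0 ≤ φ x ∧ φ x ≤ c) : ∀ᵐ x ∂μ, 0 ≤ T φ x ∧ T φ x ≤ c := by
  rcases hc.eq_or_lt with rfl | hc
  · have hφ0 : φ = 0 := by
      ext1
      filter_upwards [hφ, Lp.coeFn_zero ℝ p μ] with x hx h0
      rw [h0, Pi.zero_apply]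
      exact le_antisymm hx.2 hx.1
    rw [hφ0, map_zero]
    filter_upwards [Lp.coeFn_zero ℝ p μ] with x hx
    rw [hx, Pi.zero_apply]
    exact ⟨le_rfl, le_rfl⟩
  · have hscaled := hT (c⁻¹ • φ) (by
      filter_upwards [hφ, Lp.coeFn_smul c⁻¹ φ] with x hx hsmul
      rw [hsmul, Pi.smul_apply, smul_eq_mul, inv_mul_le_one₀ hc]
      exact ⟨by positivity [hx.1], hx.2⟩)
    filter_upwards [hscaled, Lp.coeFn_smul c⁻¹ (T φ)] with x hx hsmul
    rw [map_smul, hsmul, Pi.smul_apply, smul_eq_mul, inv_mul_le_one₀ hc] at hx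
    exact ⟨nonneg_of_mul_nonneg_right hx.1 (inv_pos.2 hc), hx.2⟩

lemma map_nonneg (hT : IsSubMarkovian T) (hp : p ≠ ∞) {φ : Lp ℝ p μ} (hφ : 0 ≤ φ) :
    0 ≤ T φ := by
  refine (Lp.simpleFunc.denseRange_coeSimpleFuncNonnegToLpNonneg p μ ℝ hp).induction_on
    (p := fun ψ : {ψ : Lp ℝ p μ // 0 ≤ ψ} => 0 ≤ T ψ) ⟨φ, hφ⟩
    (isClosed_le continuous_const (T.continuous.comp continuous_subtype_val)) ?_
  rintro ⟨g, hg⟩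
  obtain ⟨C, hC⟩ := (Lp.simpleFunc.toSimpleFunc g).exists_forall_le
  rw [← Lp.coeFn_nonneg]
  refine (hT.ae_mem_Icc (le_max_right C 0) ?_).mono fun x hx => hx.1
  filter_upwards [(Lp.coeFn_nonneg _).2 hg, Lp.simpleFunc.toSimpleFunc_eq_toFun g] with x hx hgx
  exact ⟨hx, hgx ▸ (hC x).trans (le_max_left C 0)⟩

lemma monotone (hT : IsSubMarkovian T) (hp : p ≠ ∞) : Monotone T := fun f g hfg => by
  simpa using hT.map_nonneg hp (sub_nonneg.2 hfg)

lemma ae_le_const (hT : IsSubMarkovian T) (hp : p ≠ ∞) {u : Lp ℝ p μ} {c : ℝ} (hc : 0 ≤ c)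
    (hu : ∀ᵐ x ∂μ, u x ≤ c) : ∀ᵐ x ∂μ, T u x ≤ c := by
  have hpos : ∀ᵐ x ∂μ, 0 ≤ (u ⊔ 0) x ∧ (u ⊔ 0) x ≤ c := by
    filter_upwards [hu, Lp.coeFn_sup u 0, Lp.coeFn_zero ℝ p μ] with x hx hsup h0
    rw [hsup, Pi.sup_apply, h0, Pi.zero_apply]
    exact ⟨le_sup_right, sup_le hx hc⟩
  filter_upwards [(Lp.coeFn_le _ _).2 (hT.monotone hp (le_sup_left : u ≤ u ⊔ 0)),
    hT.ae_mem_Icc hc hpos] with x hmono hx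
  exact hmono.trans hx.2

lemma ae_affine_le (hT : IsSubMarkovian T) (hp : p ≠ ∞) {u w : Lp ℝ p μ} {a b : ℝ} (hb : b ≤ 0)
    (h : ∀ᵐ x ∂μ, a * u x + b ≤ w x) : ∀ᵐ x ∂μ, a * T u x + b ≤ T w x := by
  have hdiff : ∀ᵐ x ∂μ, (a • u - w) x ≤ -b := by
    filter_upwards [h, Lp.coeFn_sub (a • u) w, Lp.coeFn_smul a u] with x hx hsub hsmul
    rw [hsub, Pi.sub_apply, hsmul, Pi.smul_apply, smul_eq_mul]
    linarith
  filter_upwards [hT.ae_le_const hp (neg_nonneg.2 hb) hdiff, Lp.coeFn_sub (a • T u) (T w),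
    Lp.coeFn_smul a (T u)] with x hx hsub hsmul
  rw [map_sub, map_smul, hsub, Pi.sub_apply, hsmul, Pi.smul_apply, smul_eq_mul] at hx
  linarith

variable {a b : ℕ → ℝ}

lemma ae_affineEnvelope_le (hT : IsSubMarkovian T) (hp : p ≠ ∞) (hb : ∀ i, b i ≤ 0) {m : ℕ}
    {u w : Lp ℝ p μ} (h : ∀ᵐ x ∂μ, affineEnvelope a b m (u x) ≤ w x) :
    ∀ᵐ x ∂μ, affineEnvelope a b m (T u x) ≤ T w x := by
  have hpieces : ∀ i, ∀ᵐ x ∂μ, i ≤ m → a i * T u x + b i ≤ T w x := fun i => by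
    by_cases hi : i ≤ m
    · refine (hT.ae_affine_le hp (hb i) ?_).mono fun x hx _ => hx
      exact h.mono fun x hx => (affineEnvelope_le_iff.1 hx).2 i hi
    · exact Eventually.of_forall fun x hi' => absurd hi' hi
  have hTw : 0 ≤ T w :=
    hT.map_nonneg hp <| (Lp.coeFn_nonneg w).1 <| h.mono fun x hx => (affineEnvelope_le_iff.1 hx).1
  filter_upwards [ae_all_iff.2 hpieces, (Lp.coeFn_nonneg _).2 hTw] with x hx h0
  exact affineEnvelope_le_iff.2 ⟨h0, hx⟩

lemma lintegral_affineEnvelope_le (hT : IsSubMarkovian T) (hp : p ≠ ∞)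
    (hT1 : ∀ φ : Lp ℝ p μ, eLpNorm (T φ) 1 μ ≤ eLpNorm φ 1 μ) (hb : ∀ i, b i ≤ 0) (m : ℕ)
    (v : Lp ℝ p μ) :
    ∫⁻ x, ENNReal.ofReal (affineEnvelope a b m (T v x)) ∂μ ≤
      ∫⁻ x, ENNReal.ofReal (affineEnvelope a b m (v x)) ∂μ := by
  obtain ⟨K, hK⟩ := lipschitzWith_affineEnvelope (a := a) (b := b) m
  set w := hK.compLp (affineEnvelope_apply_zero hb m) v
  have hw : w =ᵐ[μ] affineEnvelope a b m ∘ v := hK.coeFn_compLp _ v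
  calc ∫⁻ x, ENNReal.ofReal (affineEnvelope a b m (T v x)) ∂μ
      ≤ ∫⁻ x, ENNReal.ofReal (T w x) ∂μ :=
        lintegral_mono_ae <| (hT.ae_affineEnvelope_le hp hb hw.symm.le).mono
          fun x hx => ENNReal.ofReal_le_ofReal hx
    _ ≤ ∫⁻ x, ‖T w x‖ₑ ∂μ := lintegral_mono fun x => Real.ofReal_le_enorm _
    _ = eLpNorm (T w) 1 μ := eLpNorm_one_eq_lintegral_enorm.symm
    _ ≤ eLpNorm w 1 μ := hT1 w
    _ = ∫⁻ x, ENNReal.ofReal (affineEnvelope a b m (v x)) ∂μ := by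
      rw [eLpNorm_one_eq_lintegral_enorm]
      refine lintegral_congr_ae (hw.mono fun x hx => ?_)
      dsimp only
      rw [hx, Function.comp_apply, Real.enorm_eq_ofReal (affineEnvelope_nonneg _ _)]

end IsSubMarkovian

end SubMarkovian

lemma ConvexOn.exists_affine_le_iSup_eq {j : ℝ → ℝ} (hj : ConvexOn ℝ Set.univ j) :
    ∃ a b : ℕ → ℝ, (∀ i r, a i * r + b i ≤ j r) ∧ ∀ r, ⨆ i, (a i * r + b i) = j r := by
  obtain ⟨l, c, hle, hsup⟩ :=
    hj.real_univ_sSup_of_nat_affine_eq hj.locallyLipschitz.continuous.lowerSemicontinuous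
  have hl (i : ℕ) (r : ℝ) : l i 1 * r = l i r := by
    rw [mul_comm, ← smul_eq_mul, ← map_smul, smul_eq_mul, mul_one]
  refine ⟨fun i => l i 1, c, fun i r => ?_, fun r => ?_⟩
  · simpa only [hl, Pi.add_apply, Function.const_apply] using hle i r
  · simpa only [hl, iSup_apply, Pi.add_apply, Function.const_apply] using congrFun hsup r

theorem L1_norm_j_Tv_le_general
    {O : Type*} [MeasurableSpace O] (μ : Measure O)
    (T : Lp ℝ 2 μ →L[ℝ] Lp ℝ 2 μ)
    -- T is sub-Markovian
    (hTsubMarkov : ∀ φ : Lp ℝ 2 μ,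
      (∀ᵐ x ∂μ, 0 ≤ φ x ∧ φ x ≤ 1) → (∀ᵐ x ∂μ, 0 ≤ T φ x ∧ T φ x ≤ 1))
    -- T is an L¹-contraction
    (hTL1contr : ∀ φ : Lp ℝ 2 μ, eLpNorm (⇑(T φ)) 1 μ ≤ eLpNorm (⇑φ) 1 μ)
    -- j : ℝ → ℝ₊ convex with j 0 = 0
    (j : ℝ → ℝ) (hjconv : ConvexOn ℝ Set.univ j)
    (hjpos : ∀ r : ℝ, 0 ≤ j r) (hj0 : j 0 = 0)
    (v : Lp ℝ 2 μ) :
    ∫⁻ x, ENNReal.ofReal (j (T v x)) ∂μ ≤ ∫⁻ x, ENNReal.ofReal (j (v x)) ∂μ := by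
  have hT : IsSubMarkovian T := hTsubMarkov
  obtain ⟨a, b, hle, hsup⟩ := hjconv.exists_affine_le_iSup_eq
  have hb (i : ℕ) : b i ≤ 0 := by simpa [hj0] using hle i 0
  have hmeas (m : ℕ) : AEMeasurable (fun x => ENNReal.ofReal (affineEnvelope a b m (T v x))) μ :=
    ((continuous_affineEnvelope m).measurable.comp_aemeasurable
      (Lp.aestronglyMeasurable (T v)).aemeasurable).ennreal_ofReal
  refine le_of_tendsto' (lintegral_tendsto_of_tendsto_of_monotone hmeas
    (Eventually.of_forall fun x m n hmn => ENNReal.ofReal_le_ofReal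
      (affineEnvelope_monotone _ hmn))
    (Eventually.of_forall fun x => ENNReal.tendsto_ofReal
      (tendsto_affineEnvelope hle hsup hjpos _))) fun m => ?_
  calc _ ≤ _ := hT.lintegral_affineEnvelope_le ENNReal.ofNat_ne_top hTL1contr hb m v
    _ ≤ _ := lintegral_mono fun x => ENNReal.ofReal_le_ofReal
        (affineEnvelope_le_iff.2 ⟨hjpos _, fun i _ => hle i _⟩)

/-- generalized Jensen inequality plus `L¹`-contractivity.  Let `T`
be a linear sub-Markovian operator on `L²(O,μ)` which is also an `L¹(O,μ)`-contraction,
and let `j : ℝ → [0,∞)` be convex with `j 0 = 0`.  Then for every `v ∈ L²(O,μ)` with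
`j ∘ v ∈ L¹(O,μ)` one has `‖j(Tv)‖_{L¹} ≤ ‖j(v)‖_{L¹}`. -/
theorem L1_norm_j_Tv_le
    {O : Type*} [MeasurableSpace O] (μ : Measure O) [SigmaFinite μ]
    (T : Lp ℝ 2 μ →L[ℝ] Lp ℝ 2 μ)
    -- T is sub-Markovian
    (hTsubMarkov : ∀ φ : Lp ℝ 2 μ,
      (∀ᵐ x ∂μ, 0 ≤ φ x ∧ φ x ≤ 1) → (∀ᵐ x ∂μ, 0 ≤ T φ x ∧ T φ x ≤ 1))
    -- T is an L¹-contraction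
    (hTL1contr : ∀ φ : Lp ℝ 2 μ, eLpNorm (⇑(T φ)) 1 μ ≤ eLpNorm (⇑φ) 1 μ)
    -- j : ℝ → ℝ₊ convex with j 0 = 0
    (j : ℝ → ℝ) (hjconv : ConvexOn ℝ Set.univ j)
    (hjpos : ∀ r : ℝ, 0 ≤ j r) (hj0 : j 0 = 0)
    (v : Lp ℝ 2 μ) (hjv : Integrable (fun x => j (v x)) μ) :
    ∫⁻ x, ENNReal.ofReal (j (T v x)) ∂μ ≤ ∫⁻ x, ENNReal.ofReal (j (v x)) ∂μ :=
  L1_norm_j_Tv_le_general μ T hTsubMarkov hTL1contr j hjconv hjpos hj0 v
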